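/- Define the vector field 𝔙 = (𝔙_x, 𝔙_y) on ℝ² by 𝔙_x(x,y) = −cos y + √3·sin(x/2)·sin(√3·y/2) + cos(√3·x/2)·cos(y/2) and 𝔙_y(x,y) = 𝔙_x(y,x) = −cos x + √3·sin(y/2)·sin(√3·x/2) + cos(√3·y/2)·cos(x/2). Then 𝔙 satisfies the vector Helmholtz equation Δ𝔙 = −𝔙 (componentwise, i.e. Δ𝔙_x = −𝔙_x and Δ𝔙_y = −𝔙_y) and is solenoidal: ∂𝔙_x/∂x + ∂𝔙_y/∂y = 0. -/

import Mathlib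

noncomputable section

open Real

/-- Partial derivative in the `i`-th coordinate direction, on ℝ². -/
def pd2 (i : Fin 2) (F : (Fin 2 → ℝ) → ℝ) : (Fin 2 → ℝ) → ℝ :=
  fun v => deriv (fun t => F (Function.update v i t)) (v i)

/-- Laplacian of a scalar function on ℝ². -/
def lap2 (F : (Fin 2 → ℝ) → ℝ) : (Fin 2 → ℝ) → ℝ :=
  fun v => pd2 0 (pd2 0 F) v + pd2 1 (pd2 1 F) v

/-- Divergence of a vector field on ℝ². -/
def div2 (V : (Fin 2 → ℝ) → (Fin 2 → ℝ)) : (Fin 2 → ℝ) → ℝ :=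
  fun v => pd2 0 (fun w => V w 0) v + pd2 1 (fun w => V w 1) v

/-- The first component of the dihedral lambent field `𝔙`. -/
def Vx : ℝ → ℝ → ℝ := fun x y =>
  -Real.cos y + Real.sqrt 3 * Real.sin (x / 2) * Real.sin (Real.sqrt 3 * y / 2)
    + Real.cos (Real.sqrt 3 * x / 2) * Real.cos (y / 2)

/-- The dihedral lambent vector field `𝔙 = (𝔙ₓ(x,y), 𝔙ₓ(y,x))`. -/
def Vfield : (Fin 2 → ℝ) → (Fin 2 → ℝ) := fun v => ![Vx (v 0) (v 1), Vx (v 1) (v 0)]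

/-!
Each of the three terms of `𝔙ₓ` is a product `g(x) h(y)` of trigonometric functions with
`g'' = -α² g`, `h'' = -β² h` and `α² + β² = 1` (the frequency pairs are `(0, 1)`, `(1/2, √3/2)`
and `(√3/2, 1/2)`), so `Δ𝔙ₓ = -𝔙ₓ`; the same holds for `𝔙_y`, which is `𝔙ₓ` with the
coordinates swapped. The divergence is `∂ₓ𝔙ₓ(x, y) + ∂ₓ𝔙ₓ(y, x)`, which vanishes because
`∂ₓ𝔙ₓ` is antisymmetric in its two arguments.
-/

section TwoVariables

variable {f fx fy fxx fyy : ℝ → ℝ → ℝ}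

lemma pd2_zero_of_hasDerivAt (hx : ∀ x y, HasDerivAt (f · y) (fx x y) x) :
    pd2 0 (fun w => f (w 0) (w 1)) = fun w => fx (w 0) (w 1) := by
  funext w
  simpa [pd2] using (hx (w 0) (w 1)).deriv

lemma pd2_one_of_hasDerivAt (hy : ∀ x y, HasDerivAt (f x ·) (fy x y) y) :
    pd2 1 (fun w => f (w 0) (w 1)) = fun w => fy (w 0) (w 1) := by
  funext w
  simpa [pd2] using (hy (w 0) (w 1)).deriv

lemma lap2_of_hasDerivAt (hx : ∀ x y, HasDerivAt (f · y) (fx x y) x)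
    (hxx : ∀ x y, HasDerivAt (fx · y) (fxx x y) x) (hy : ∀ x y, HasDerivAt (f x ·) (fy x y) y)
    (hyy : ∀ x y, HasDerivAt (fy x ·) (fyy x y) y) :
    lap2 (fun w => f (w 0) (w 1)) = fun w => fxx (w 0) (w 1) + fyy (w 0) (w 1) := by
  funext w
  simp only [lap2, pd2_zero_of_hasDerivAt hx, pd2_zero_of_hasDerivAt hxx,
    pd2_one_of_hasDerivAt hy, pd2_one_of_hasDerivAt hyy]

end TwoVariables

def VxDx (x y : ℝ) : ℝ :=
  √3 / 2 * cos (x / 2) * sin (√3 * y / 2) - √3 / 2 * sin (√3 * x / 2) * cos (y / 2)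

def VxDy (x y : ℝ) : ℝ :=
  sin y + 3 / 2 * sin (x / 2) * cos (√3 * y / 2) - 1 / 2 * cos (√3 * x / 2) * sin (y / 2)

def VxDxx (x y : ℝ) : ℝ :=
  -(√3 / 4) * sin (x / 2) * sin (√3 * y / 2) - 3 / 4 * cos (√3 * x / 2) * cos (y / 2)

def VxDyy (x y : ℝ) : ℝ :=
  cos y - 3 * √3 / 4 * sin (x / 2) * sin (√3 * y / 2) - 1 / 4 * cos (√3 * x / 2) * cos (y / 2)

lemma hasDerivAt_Vx_fst (x y : ℝ) : HasDerivAt (Vx · y) (VxDx x y) x := by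
  have hsin := ((hasDerivAt_id' x).div_const 2).sin
  have hcos := (((hasDerivAt_id' x).const_mul √3).div_const 2).cos
  refine (((hasDerivAt_const x (-cos y)).add ((hsin.const_mul √3).mul_const _)).add
    (hcos.mul_const _)).congr_deriv ?_
  simp only [VxDx]
  ring

lemma hasDerivAt_Vx_snd (x y : ℝ) : HasDerivAt (Vx x ·) (VxDy x y) y := by
  have hsin := (((hasDerivAt_id' y).const_mul √3).div_const 2).sin
  have hcos := ((hasDerivAt_id' y).div_const 2).cos
  refine (((hasDerivAt_cos y).neg.add (hsin.const_mul (√3 * sin (x / 2)))).add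
    (hcos.const_mul _)).congr_deriv ?_
  simp only [VxDy]
  linear_combination (sin (x / 2) * cos (√3 * y / 2) / 2) * mul_self_sqrt zero_le_three

lemma hasDerivAt_VxDx_fst (x y : ℝ) : HasDerivAt (VxDx · y) (VxDxx x y) x := by
  have hcos := ((hasDerivAt_id' x).div_const 2).cos
  have hsin := (((hasDerivAt_id' x).const_mul √3).div_const 2).sin
  refine (((hcos.const_mul (√3 / 2)).mul_const _).sub
    ((hsin.const_mul (√3 / 2)).mul_const _)).congr_deriv ?_
  simp only [VxDxx]
  linear_combination (-(cos (√3 * x / 2) * cos (y / 2)) / 4) * mul_self_sqrt zero_le_three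

lemma hasDerivAt_VxDy_snd (x y : ℝ) : HasDerivAt (VxDy x ·) (VxDyy x y) y := by
  have hcos := (((hasDerivAt_id' y).const_mul √3).div_const 2).cos
  have hsin := ((hasDerivAt_id' y).div_const 2).sin
  refine (((hasDerivAt_sin y).add (hcos.const_mul (3 / 2 * sin (x / 2)))).sub
    (hsin.const_mul (1 / 2 * cos (√3 * x / 2)))).congr_deriv ?_
  simp only [VxDyy]
  ring

lemma VxDxx_add_VxDyy (x y : ℝ) : VxDxx x y + VxDyy x y = -Vx x y := by
  simp only [VxDxx, VxDyy, Vx]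
  ring

lemma VxDx_swap (x y : ℝ) : VxDx y x = -VxDx x y := by
  simp only [VxDx]
  ring

/-- `𝔙` satisfies the vector Helmholtz equation `Δ𝔙 = -𝔙` componentwise
and is solenoidal. -/
theorem dihedral_V_helmholtz_solenoidal :
    (∀ v, lap2 (fun w => Vfield w 0) v = -(Vfield v 0)) ∧
    (∀ v, lap2 (fun w => Vfield w 1) v = -(Vfield v 1)) ∧
    (∀ v, div2 Vfield v = 0) := by
  have lap_Vx := lap2_of_hasDerivAt hasDerivAt_Vx_fst hasDerivAt_VxDx_fst hasDerivAt_Vx_snd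
    hasDerivAt_VxDy_snd
  have lap_Vx_swap := lap2_of_hasDerivAt (f := flip Vx) (fun x y => hasDerivAt_Vx_snd y x)
    (fun x y => hasDerivAt_VxDy_snd y x) (fun x y => hasDerivAt_Vx_fst y x)
    (fun x y => hasDerivAt_VxDx_fst y x)
  refine ⟨fun v => ?_, fun v => ?_, fun v => ?_⟩
  · exact (congrFun lap_Vx v).trans (VxDxx_add_VxDyy _ _)
  · exact (congrFun lap_Vx_swap v).trans ((add_comm _ _).trans (VxDxx_add_VxDyy _ _))
  · change pd2 0 (fun w => Vx (w 0) (w 1)) v + pd2 1 (fun w => flip Vx (w 0) (w 1)) v = 0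
    rw [pd2_zero_of_hasDerivAt hasDerivAt_Vx_fst,
      pd2_one_of_hasDerivAt (f := flip Vx) fun x y => hasDerivAt_Vx_fst y x]
    exact add_eq_zero_iff_eq_neg.mpr (VxDx_swap (v 1) (v 0))
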